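/- arXiv:1904.03340 — 9 statements merged into one kernel-verified Lean document; each statement's English description precedes it below -/
import Mathlib

section
/- For finite groups A and B, ψ(A × B) ≤ ψ(A)·ψ(B), with equality if and only if gcd(|A|, |B|) = 1. -/
/-- ψ(A × B) ≤ ψ(A)·ψ(B), with equality iff gcd(|A|,|B|) = 1. -/
theorem psi_prod_le (A B : Type*) [Group A] [Group B] [Fintype A] [Fintype B] :
    (∑ x : A × B, orderOf x) ≤ (∑ a : A, orderOf a) * (∑ b : B, orderOf b) ∧
    ((∑ x : A × B, orderOf x) = (∑ a : A, orderOf a) * (∑ b : B, orderOf b) ↔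
      Nat.Coprime (Fintype.card A) (Fintype.card B)) := by
  have hle : ∀ x : A × B, orderOf x ≤ orderOf x.1 * orderOf x.2 := by
    intro x
    rw [Prod.orderOf]
    exact Nat.le_of_dvd (Nat.mul_pos (orderOf_pos _) (orderOf_pos _))
      (Nat.lcm_dvd (dvd_mul_right _ _) (dvd_mul_left _ _))
  have h2 : (∑ x : A × B, orderOf x.1 * orderOf x.2)
      = (∑ a : A, orderOf a) * (∑ b : B, orderOf b) := by
    rw [Fintype.sum_prod_type, Finset.sum_mul_sum]
  have h1 : (∑ x : A × B, orderOf x) ≤ (∑ a : A, orderOf a) * (∑ b : B, orderOf b) := by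
    rw [← h2]
    exact Finset.sum_le_sum fun x _ => hle x
  refine ⟨h1, ?_, ?_⟩
  · intro heq
    by_contra hnc
    obtain ⟨p, hp, hpd⟩ := Nat.exists_prime_and_dvd hnc
    haveI := Fact.mk hp
    obtain ⟨a, ha⟩ := exists_prime_orderOf_dvd_card p
      (hpd.trans (Nat.gcd_dvd_left _ _))
    obtain ⟨b, hb⟩ := exists_prime_orderOf_dvd_card p
      (hpd.trans (Nat.gcd_dvd_right _ _))
    rw [← h2] at heq
    have hall := (Finset.sum_eq_sum_iff_of_le (fun x _ => hle x)).mp heq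
      (a, b) (Finset.mem_univ _)
    rw [Prod.orderOf] at hall
    simp only [ha, hb, Nat.lcm_self] at hall
    nlinarith [hp.two_le]
  · intro hc
    rw [← h2]
    refine Finset.sum_congr rfl fun x _ => ?_
    rw [Prod.orderOf]
    exact Nat.Coprime.lcm_eq_mul
      ((hc.coprime_dvd_left (orderOf_dvd_card)).coprime_dvd_right (orderOf_dvd_card))
end

section
/- For any finite group G and any normal subgroup H of G, ψ(G)/|G|² ≤ ψ(G/H)/|G/H|². -/
open Finset in
lemma psi_aux_sum_le (G : Type*) [Group G] [Fintype G] (H : Subgroup G) [H.Normal]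
    [Fintype (G ⧸ H)] :
    (∑ x : G, orderOf x) ≤ Nat.card H ^ 2 * ∑ x : G ⧸ H, orderOf x := by
  classical
  -- pointwise bound : orderOf x ≤ orderOf (mk x) * card H
  have key : ∀ x : G, orderOf x ≤ orderOf ((x : G ⧸ H)) * Nat.card H := by
    intro x
    have hm : (x : G ⧸ H) ^ orderOf ((x : G ⧸ H)) = 1 := pow_orderOf_eq_one _
    have hmem : x ^ orderOf ((x : G ⧸ H)) ∈ H := by
      rwa [← QuotientGroup.eq_one_iff, QuotientGroup.mk_pow]
    have h1 : x ^ (orderOf ((x : G ⧸ H)) * Nat.card H) = 1 := by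
      rw [pow_mul]
      have h2 : ((⟨x ^ orderOf ((x : G ⧸ H)), hmem⟩ : H) : G) ^ Nat.card H = 1 := by
        rw [← Subgroup.coe_pow, pow_card_eq_one']
        rfl
      simpa using h2
    have hdvd : orderOf x ∣ orderOf ((x : G ⧸ H)) * Nat.card H := orderOf_dvd_of_pow_eq_one h1
    refine Nat.le_of_dvd ?_ hdvd
    have h1 : 0 < orderOf ((x : G ⧸ H)) := orderOf_pos _
    have h2 : 0 < Nat.card H := Nat.card_pos
    positivity
  calc (∑ x : G, orderOf x) ≤ ∑ x : G, orderOf ((x : G ⧸ H)) * Nat.card H :=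
        Finset.sum_le_sum fun x _ => key x
    _ = (∑ x : G, orderOf ((x : G ⧸ H))) * Nat.card H := by rw [Finset.sum_mul]
    _ = (∑ q : G ⧸ H, ∑ x ∈ univ.filter (fun x : G => (x : G ⧸ H) = q), orderOf q)
          * Nat.card H := by
        rw [Finset.sum_fiberwise' univ (fun x : G => (x : G ⧸ H)) (fun q => orderOf q)]
    _ = (∑ q : G ⧸ H, Nat.card H * orderOf q) * Nat.card H := by
        congr 1
        refine Finset.sum_congr rfl fun q _ => ?_
        rw [Finset.sum_const, smul_eq_mul]
        congr 1
        have : (univ.filter (fun x : G => (x : G ⧸ H) = q)).card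
            = Fintype.card {x : G // (x : G ⧸ H) = q} := (Fintype.card_subtype _).symm
        rw [this, ← Nat.card_eq_fintype_card]
        have e : {x : G // (x : G ⧸ H) = q} ≃ H × ({q} : Set (G ⧸ H)) := by
          refine (Equiv.subtypeEquivRight ?_).trans
            (QuotientGroup.preimageMkEquivSubgroupProdSet H ({q} : Set (G ⧸ H)))
          intro x; simp [Set.mem_preimage]
        rw [Nat.card_congr e, Nat.card_prod]
        simp
    _ = Nat.card H ^ 2 * ∑ q : G ⧸ H, orderOf q := by
        rw [← Finset.mul_sum]; ring

/-- ψ''(G) ≤ ψ''(G/H) for any normal subgroup H of G. -/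
theorem psi''_le_quotient (G : Type*) [Group G] [Fintype G] (H : Subgroup G) [H.Normal]
    [Fintype (G ⧸ H)] :
    ((∑ x : G, orderOf x : ℕ) : ℚ) / (Fintype.card G : ℚ) ^ 2 ≤
      ((∑ x : G ⧸ H, orderOf x : ℕ) : ℚ) / (Fintype.card (G ⧸ H) : ℚ) ^ 2 := by
  have hG : (0 : ℚ) < (Fintype.card G : ℚ) := by exact_mod_cast Fintype.card_pos
  have hQ : (0 : ℚ) < (Fintype.card (G ⧸ H) : ℚ) := by exact_mod_cast Fintype.card_pos
  rw [div_le_div_iff₀ (by positivity) (by positivity)]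
  have hcard : Fintype.card G = Fintype.card (G ⧸ H) * Nat.card H := by
    have := Subgroup.card_eq_card_quotient_mul_card_subgroup (s := H)
    simpa [Nat.card_eq_fintype_card] using this
  have hkey := psi_aux_sum_le G H
  have : ((∑ x : G, orderOf x : ℕ) : ℚ) ≤ (Nat.card H : ℚ) ^ 2 * (∑ x : G ⧸ H, orderOf x : ℕ) := by
    exact_mod_cast hkey
  calc ((∑ x : G, orderOf x : ℕ) : ℚ) * (Fintype.card (G ⧸ H) : ℚ) ^ 2
      ≤ (Nat.card H : ℚ) ^ 2 * (∑ x : G ⧸ H, orderOf x : ℕ) * (Fintype.card (G ⧸ H) : ℚ) ^ 2 := by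
        apply mul_le_mul_of_nonneg_right this (by positivity)
    _ = ((∑ x : G ⧸ H, orderOf x : ℕ) : ℚ) * (Fintype.card G : ℚ) ^ 2 := by
        rw [hcard]; push_cast; ring
end

section
/- If G is a finite group with ψ(G)/|G|² ≥ 1/3, then either G is cyclic or there exists x ∈ G with [G : ⟨x⟩] = 2. -/
/-- If ψ''(G) ≥ 1/3 then G is cyclic or some cyclic subgroup has index 2. -/
theorem cyclic_or_index_two (G : Type*) [Group G] [Fintype G]
    (h : (1 : ℚ) / 3 ≤ ((∑ x : G, orderOf x : ℕ) : ℚ) / (Fintype.card G : ℚ) ^ 2) :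
    IsCyclic G ∨ ∃ x : G, (Subgroup.zpowers x).index = 2 := by
  by_contra hc
  push_neg at hc
  obtain ⟨hnc, hidx⟩ := hc
  have hnpos : 0 < Fintype.card G := Fintype.card_pos
  rcases lt_or_ge (Fintype.card G) 4 with h4 | h4
  · -- |G| ≤ 3 : G is cyclic, contradiction
    apply hnc
    have hcard : Nat.card G = Fintype.card G := Nat.card_eq_fintype_card
    interval_cases hn : (Fintype.card G)
    · haveI : Subsingleton G := Fintype.card_le_one_iff_subsingleton.mp (by omega)
      infer_instance
    · haveI : Fact (Nat.Prime 2) := ⟨by norm_num⟩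
      exact isCyclic_of_prime_card (p := 2) (by omega)
    · haveI : Fact (Nat.Prime 3) := ⟨by norm_num⟩
      exact isCyclic_of_prime_card (p := 3) (by omega)
  · -- |G| ≥ 4 : contradiction with the sum bound
    have key : ∀ x : G, 3 * orderOf x ≤ Fintype.card G := by
      intro x
      have hmul : orderOf x * (Subgroup.zpowers x).index = Fintype.card G := by
        rw [← Nat.card_zpowers x, Subgroup.card_mul_index, Nat.card_eq_fintype_card]
      have hi0 : (Subgroup.zpowers x).index ≠ 0 := Subgroup.index_ne_zero_of_finite
      have hi1 : (Subgroup.zpowers x).index ≠ 1 := by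
        intro h1
        have htop : Subgroup.zpowers x = ⊤ := Subgroup.index_eq_one.mp h1
        exact hnc ⟨⟨x, fun y => by rw [← Subgroup.mem_zpowers_iff, htop]; exact Subgroup.mem_top y⟩⟩
      have hi2 := hidx x
      have hi3 : 3 ≤ (Subgroup.zpowers x).index := by omega
      nlinarith [orderOf_pos x]
    have hsum : 3 * (∑ x : G, orderOf x) < Fintype.card G * Fintype.card G := by
      have h1 : ∑ x : G, 3 * orderOf x < ∑ _x : G, Fintype.card G := by
        apply Finset.sum_lt_sum
        · intro i _; exact key i
        · exact ⟨1, Finset.mem_univ 1, by simp only [orderOf_one]; omega⟩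
      rw [← Finset.mul_sum] at h1
      simpa [Finset.sum_const, Finset.card_univ] using h1
    have hn2 : (0:ℚ) < (Fintype.card G : ℚ)^2 := by positivity
    rw [div_le_div_iff₀ (by norm_num) hn2] at h
    have h3 : ((Fintype.card G : ℚ))^2 ≤ 3 * ((∑ x : G, orderOf x : ℕ) : ℚ) := by linarith
    have h4' : (Fintype.card G)^2 ≤ 3 * ∑ x : G, orderOf x := by exact_mod_cast h3
    rw [pow_two] at h4'
    omega
end

section
/- For the dihedral group D_{2^n} of order 2^n with n ≥ 3, ψ(D_{2^n}) = (2^{2n-1} + 3·2^n + 1)/3, and consequently ψ(D_{2^n})/|D_{2^n}|² < 13/36. -/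
open Finset

lemma sum_range_two_mul' (f : ℕ → ℕ) (m : ℕ) :
    ∑ a ∈ Finset.range (2 * m), f a = ∑ i ∈ Finset.range m, (f (2 * i) + f (2 * i + 1)) := by
  induction m with
  | zero => simp
  | succ m ih =>
    have h : 2 * (m + 1) = (2 * m + 1) + 1 := by ring
    rw [h, Finset.sum_range_succ, Finset.sum_range_succ, ih, Finset.sum_range_succ]
    omega

lemma sum_orders_pow_two (k : ℕ) :
    (∑ a ∈ Finset.range (2 ^ k), 2 ^ k / Nat.gcd (2 ^ k) a) * 3 = 2 ^ (2 * k + 1) + 1 := by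
  induction k with
  | zero => simp
  | succ k ih =>
    have h2 : (2:ℕ) ^ (k + 1) = 2 * 2 ^ k := by ring
    rw [h2, sum_range_two_mul']
    have heq : ∀ i ∈ Finset.range (2 ^ k),
        2 * 2 ^ k / Nat.gcd (2 * 2 ^ k) (2 * i) + 2 * 2 ^ k / Nat.gcd (2 * 2 ^ k) (2 * i + 1)
        = 2 ^ k / Nat.gcd (2 ^ k) i + 2 ^ (k + 1) := by
      intro i _
      have hodd : Nat.gcd (2 * 2 ^ k) (2 * i + 1) = 1 := by
        have : Nat.Coprime (2 ^ (k + 1)) (2 * i + 1) := by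
          apply Nat.Coprime.pow_left
          rw [Nat.coprime_two_left]
          exact ⟨i, by ring⟩
        rwa [← h2]
      rw [Nat.gcd_mul_left, Nat.mul_div_mul_left _ _ (by norm_num), hodd, Nat.div_one, h2]
    rw [Finset.sum_congr rfl heq, Finset.sum_add_distrib, Finset.sum_const, add_mul, ih,
      Finset.card_range, smul_eq_mul]
    ring

def dihedralSumEquiv (m : ℕ) : ZMod m ⊕ ZMod m ≃ DihedralGroup m where
  toFun := Sum.elim DihedralGroup.r DihedralGroup.sr
  invFun := fun x => match x with | .r i => .inl i | .sr i => .inr i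
  left_inv := by rintro (i | i) <;> rfl
  right_inv := by rintro (i | i) <;> rfl

lemma sum_orderOf_dihedral (m : ℕ) [NeZero m] :
    ∑ x : DihedralGroup m, orderOf x
      = (∑ a ∈ Finset.range m, m / Nat.gcd m a) + 2 * m := by
  rw [← Fintype.sum_equiv (dihedralSumEquiv m)
      (fun s => orderOf (dihedralSumEquiv m s)) (fun x => orderOf x) (fun s => rfl),
    Fintype.sum_sum_type]
  have h1 : ∑ i : ZMod m, orderOf ((dihedralSumEquiv m) (Sum.inl i))
      = ∑ a ∈ Finset.range m, m / Nat.gcd m a := by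
    simp only [dihedralSumEquiv, Equiv.coe_fn_mk, Sum.elim_inl, DihedralGroup.orderOf_r]
    refine Finset.sum_nbij' (fun i => ZMod.val i) (fun a => (a : ZMod m)) ?_ ?_ ?_ ?_ ?_
    · intro i _; exact Finset.mem_range.mpr (ZMod.val_lt i)
    · intro a _; exact Finset.mem_univ _
    · intro i _; exact ZMod.natCast_rightInverse i
    · intro a ha; exact ZMod.val_cast_of_lt (Finset.mem_range.mp ha)
    · intro i _; rfl
  have h2 : ∑ i : ZMod m, orderOf ((dihedralSumEquiv m) (Sum.inr i)) = 2 * m := by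
    simp only [dihedralSumEquiv, Equiv.coe_fn_mk, Sum.elim_inr, DihedralGroup.orderOf_sr]
    rw [Finset.sum_const, Finset.card_univ, ZMod.card, smul_eq_mul, mul_comm]
  rw [h1, h2]

/-- For the dihedral group of order 2^n, n ≥ 3:
ψ(D_{2^n}) = (2^{2n-1} + 3·2^n + 1)/3 and ψ''(D_{2^n}) < 13/36. -/
theorem psi_dihedral (n : ℕ) (hn : 3 ≤ n) :
    (∑ x : DihedralGroup (2 ^ (n - 1)), orderOf x) * 3 =
      2 ^ (2 * n - 1) + 3 * 2 ^ n + 1 ∧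
    ((∑ x : DihedralGroup (2 ^ (n - 1)), orderOf x : ℕ) : ℚ) /
        (Fintype.card (DihedralGroup (2 ^ (n - 1))) : ℚ) ^ 2 < 13 / 36 := by
  haveI : NeZero ((2:ℕ) ^ (n - 1)) := ⟨pow_ne_zero _ two_ne_zero⟩
  have key : (∑ x : DihedralGroup (2 ^ (n - 1)), orderOf x) * 3 =
      2 ^ (2 * n - 1) + 3 * 2 ^ n + 1 := by
    rw [sum_orderOf_dihedral, add_mul, sum_orders_pow_two]
    have e1 : 2 * (n - 1) + 1 = 2 * n - 1 := by omega
    have e2 : 2 * 2 ^ (n - 1) * 3 = 3 * 2 ^ n := by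
      have : 2 ^ n = 2 * 2 ^ (n - 1) := by
        rw [← pow_succ']; congr 1; omega
      rw [this]; ring
    rw [e1, e2]; ring
  refine ⟨key, ?_⟩
  have hcard : (Fintype.card (DihedralGroup (2 ^ (n - 1))) : ℕ) = 2 ^ n := by
    rw [DihedralGroup.card, ← pow_succ']; congr 1; omega
  rw [hcard]
  rw [div_lt_div_iff₀ (by positivity) (by norm_num)]
  have hnat : (2 ^ (2 * n - 1) + 3 * 2 ^ n + 1) * 36 < 13 * ((2:ℕ) ^ n) ^ 2 * 3 := by
    have hx : 8 ≤ 2 ^ n := by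
      calc (8:ℕ) = 2 ^ 3 := by norm_num
      _ ≤ 2 ^ n := Nat.pow_le_pow_right (by norm_num) hn
    have hsq : 2 ^ (2 * n - 1) * 2 = ((2:ℕ) ^ n) ^ 2 := by
      rw [← pow_succ, ← pow_mul]; congr 1; omega
    nlinarith [hsq, hx, sq_nonneg ((2:ℕ)^n)]
  have hq : ((∑ x : DihedralGroup (2 ^ (n - 1)), orderOf x : ℕ) : ℚ) * 3 * 36
      < 13 * (((2:ℕ) ^ n : ℕ) : ℚ) ^ 2 * 3 := by
    have := key
    calc ((∑ x : DihedralGroup (2 ^ (n - 1)), orderOf x : ℕ) : ℚ) * 3 * 36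
        = (((∑ x : DihedralGroup (2 ^ (n - 1)), orderOf x) * 3 : ℕ) : ℚ) * 36 := by push_cast; ring
      _ = ((2 ^ (2 * n - 1) + 3 * 2 ^ n + 1 : ℕ) : ℚ) * 36 := by rw [key]
      _ < 13 * (((2:ℕ) ^ n : ℕ) : ℚ) ^ 2 * 3 := by exact_mod_cast hnat
  linarith
end

section
/- For the generalized quaternion group Q_{2^n} of order 2^n with n ≥ 3, ψ(Q_{2^n}) = (2^{2n-1} + 3·2^{n+1} + 1)/3, and ψ(Q_{2^n})/|Q_{2^n}|² > 13/36 if and only if n = 3. -/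
open Finset

private lemma sum_range_double (f : ℕ → ℕ) (m : ℕ) :
    ∑ j ∈ range (2 * m), f j = ∑ j ∈ range m, (f (2 * j) + f (2 * j + 1)) := by
  induction m with
  | zero => simp
  | succ m ih =>
      rw [Nat.mul_succ, sum_range_succ, sum_range_succ, sum_range_succ, ← ih, ← add_assoc]

private lemma cyc_sum (k : ℕ) :
    3 * ∑ j ∈ range (2 ^ k), 2 ^ k / Nat.gcd (2 ^ k) j = 2 ^ (2 * k + 1) + 1 := by
  induction k with
  | zero => simp
  | succ k ih =>
      have h1 : (2:ℕ) ^ (k + 1) = 2 * 2 ^ k := by ring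
      rw [h1, sum_range_double]
      have h2 : ∀ j, 2 * 2 ^ k / Nat.gcd (2 * 2 ^ k) (2 * j)
          = 2 ^ k / Nat.gcd (2 ^ k) j := by
        intro j
        rw [Nat.gcd_mul_left, Nat.mul_div_mul_left _ _ two_pos]
      have h3 : ∀ j, 2 * 2 ^ k / Nat.gcd (2 * 2 ^ k) (2 * j + 1) = 2 * 2 ^ k := by
        intro j
        have hc : Nat.Coprime (2 * 2 ^ k) (2 * j + 1) := by
          have : Nat.Coprime 2 (2 * j + 1) := by
            simp [Nat.coprime_two_left, Nat.odd_iff]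
          have hpow : Nat.Coprime (2 ^ (k+1)) (2 * j + 1) := this.pow_left _
          rwa [pow_succ, mul_comm] at hpow
        rw [hc, Nat.div_one]
      simp only [h2, h3]
      rw [sum_add_distrib, mul_add, ih, sum_const, card_range, smul_eq_mul]
      ring

private def quatEquiv (m : ℕ) : ZMod (2 * m) ⊕ ZMod (2 * m) ≃ QuaternionGroup m where
  toFun i := match i with
    | Sum.inl j => QuaternionGroup.a j
    | Sum.inr j => QuaternionGroup.xa j
  invFun i := match i with
    | QuaternionGroup.a j => Sum.inl j
    | QuaternionGroup.xa j => Sum.inr j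
  left_inv := by rintro (x | x) <;> rfl
  right_inv := by rintro (x | x) <;> rfl

private lemma zmod_sum (N : ℕ) [NeZero N] (f : ℕ → ℕ) :
    ∑ i : ZMod N, f i.val = ∑ j ∈ range N, f j := by
  apply Finset.sum_bij' (fun (i : ZMod N) _ => i.val) (fun j _ => ((j : ℕ) : ZMod N))
  · intro i _; exact mem_range.mpr i.val_lt
  · intro j hj; exact mem_univ _
  · intro i _; exact ZMod.natCast_zmod_val i
  · intro j hj; exact ZMod.val_cast_of_lt (mem_range.mp hj)
  · intro i _; rfl

private lemma quat_psi (m : ℕ) [NeZero m] :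
    3 * ∑ x : QuaternionGroup m, orderOf x
      = (3 * ∑ j ∈ range (2 * m), (2 * m) / Nat.gcd (2 * m) j) + 24 * m := by
  rw [← (quatEquiv m).sum_comp fun x => orderOf x]
  rw [Fintype.sum_sum_type]
  simp only [quatEquiv, Equiv.coe_fn_mk]
  have h1 : ∀ i : ZMod (2 * m), orderOf (QuaternionGroup.a i)
      = (2 * m) / Nat.gcd (2 * m) i.val := QuaternionGroup.orderOf_a
  have h2 : ∀ i : ZMod (2 * m), orderOf (QuaternionGroup.xa i) = 4 :=
    QuaternionGroup.orderOf_xa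
  simp only [h1, h2]
  rw [zmod_sum (2 * m) (fun j => (2 * m) / Nat.gcd (2 * m) j)]
  rw [sum_const, Finset.card_univ, ZMod.card, smul_eq_mul]
  ring

/-- For the generalized quaternion group of order 2^n, n ≥ 3:
ψ(Q_{2^n}) = (2^{2n-1} + 3·2^{n+1} + 1)/3, and ψ''(Q_{2^n}) > 13/36 ↔ n = 3. -/
theorem psi_quaternion (n : ℕ) (hn : 3 ≤ n) :
    (∑ x : QuaternionGroup (2 ^ (n - 2)), orderOf x) * 3 =
      2 ^ (2 * n - 1) + 3 * 2 ^ (n + 1) + 1 ∧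
    (((∑ x : QuaternionGroup (2 ^ (n - 2)), orderOf x : ℕ) : ℚ) /
        (Fintype.card (QuaternionGroup (2 ^ (n - 2))) : ℚ) ^ 2 > 13 / 36 ↔ n = 3) := by
  obtain ⟨m, rfl⟩ : ∃ m, n = m + 3 := ⟨n - 3, by omega⟩
  haveI : NeZero (2 ^ (m + 3 - 2)) := ⟨pow_ne_zero _ two_ne_zero⟩
  have hsub : m + 3 - 2 = m + 1 := by omega
  have key : (∑ x : QuaternionGroup (2 ^ (m + 3 - 2)), orderOf x) * 3 =
      2 ^ (2 * (m + 3) - 1) + 3 * 2 ^ (m + 3 + 1) + 1 := by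
    rw [mul_comm, quat_psi]
    have h2m : 2 * 2 ^ (m + 3 - 2) = 2 ^ (m + 2) := by rw [hsub]; ring
    rw [h2m, cyc_sum (m + 2)]
    have e1 : 2 * (m + 2) + 1 = 2 * (m + 3) - 1 := by omega
    have e2 : 24 * 2 ^ (m + 3 - 2) = 3 * 2 ^ (m + 3 + 1) := by
      rw [hsub]; ring
    rw [e1, e2]; ring
  refine ⟨key, ?_⟩
  have hcard : (Fintype.card (QuaternionGroup (2 ^ (m + 3 - 2))) : ℚ) = 2 ^ (m + 3) := by
    rw [QuaternionGroup.card, hsub]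
    push_cast
    ring
  rw [hcard]
  set A : ℕ := ∑ x : QuaternionGroup (2 ^ (m + 3 - 2)), orderOf x with hA
  have hpos : (0:ℚ) < ((2:ℚ) ^ (m + 3)) ^ 2 := by positivity
  rw [gt_iff_lt, div_lt_div_iff₀ (by norm_num) hpos]
  have hAQ : (A : ℚ) * 3 = 2 ^ (2 * (m + 3) - 1) + 3 * 2 ^ (m + 3 + 1) + 1 := by
    exact_mod_cast congrArg (fun x : ℕ => (x : ℚ)) key
  have hexp : 2 * (m + 3) - 1 = 2 * m + 5 := by omega
  rw [hexp] at hAQ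
  constructor
  · intro h
    by_contra hne
    have hm : 1 ≤ m := by omega
    -- show inequality fails for m ≥ 1
    have h36 : 13 * ((2:ℚ) ^ (m + 3)) ^ 2 < 36 * A := by linarith
    have h36' : 13 * 12 * ((2:ℚ) ^ (m + 3)) ^ 2 < 12 * 36 * A := by nlinarith
    have hAval : 36 * (A:ℚ) * 3 = 36 * (2 ^ (2 * m + 5) + 3 * 2 ^ (m + 3 + 1) + 1) := by
      rw [mul_assoc, hAQ]
    have hx : (2:ℚ) ^ m ≥ 2 := by
      calc (2:ℚ) ^ m ≥ 2 ^ 1 := by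
            apply pow_le_pow_right₀ (by norm_num) hm
        _ = 2 := by norm_num
    have hb : 36 * ((2:ℚ) ^ (2 * m + 5) + 3 * 2 ^ (m + 3 + 1) + 1)
        ≤ 13 * 3 * ((2:ℚ) ^ (m + 3)) ^ 2 := by
      have e3 : (2:ℚ) ^ (2 * m + 5) = 32 * (2 ^ m) ^ 2 := by
        rw [pow_add, mul_comm 2 m, pow_mul]; ring
      have e4 : ((2:ℚ) ^ (m + 3)) ^ 2 = 64 * (2 ^ m) ^ 2 := by
        rw [← pow_mul, mul_comm (m+3) 2, mul_add, mul_comm 2 m, pow_add, pow_mul]; norm_num; ring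
      have e5 : (2:ℚ) ^ (m + 3 + 1) = 16 * 2 ^ m := by
        rw [pow_add, pow_add]; ring
      rw [e3, e4, e5]
      nlinarith [sq_nonneg ((2:ℚ)^m - 2)]
    nlinarith
  · intro hm3
    have hm0 : m = 0 := by omega
    subst hm0
    simp only [hA]
    have : (A : ℚ) = 27 := by
      have : (A:ℚ) * 3 = 81 := by rw [hAQ]; norm_num
      linarith
    rw [this]
    norm_num
end

section
/- Let G be a non-trivial semidirect product of C_{p^n} by C_2 (i.e. a non-abelian group G = C_{p^n} ⋊ C_2), where p is an odd prime and n a positive integer. Then ψ(G) = (p^{2n+1} + 2p^{n+1} + 2p^n + 1)/(p+1), and ψ(G)/|G|² ≤ 13/36, with equality if and only if p = 3 and n = 1 (i.e. G ≅ S_3). -/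
/-!
An automorphism of the cyclic group `C_{p^n}` is `a ↦ a ^ m`, and an involutive one has
`m² ≡ 1 (mod p^n)`; as `p` is odd, `p` divides only one of `m - 1`, `m + 1`, so a non-trivial
involution is inversion. Hence `G` is the generalised dihedral group of `C_{p^n}`: the elements
outside `C_{p^n}` are its `p^n` reflections, all of order `2`, and
`ψ(G) = ψ(C_{p^n}) + 2 p^n`, where `ψ(C_{p^n}) = ∑_{k ≤ n} p^k φ(p^k) = (p^{2n+1} + 1)/(p + 1)`.
With `P = p`, `Q = p^n`, the ratio `ψ(G)/|G|²` falls short of `13/36` by a quantity whose numerator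
`16PQ(Q-3) + 24Q(Q-P) + 4(7Q+3)(Q-3)` vanishes, for `3 ≤ P ≤ Q`, only at `Q = 3`.
-/

/-- A finite semidirect product of finite groups is finite. -/
noncomputable instance semidirectFintype {N G : Type*} [Group N] [Group G]
    {φ : G →* MulAut N} [Fintype N] [Fintype G] : Fintype (N ⋊[φ] G) :=
  Fintype.ofEquiv (N × G)
    { toFun := fun p => ⟨p.1, p.2⟩
      invFun := fun x => (x.left, x.right)
      left_inv := fun _ => rfl
      right_inv := fun _ => rfl }

open Finset

theorem Int.prime_pow_dvd_sub_one_or_add_one {p n : ℕ} {m : ℤ} (hp : p.Prime) (hodd : Odd p)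
    (h : (p : ℤ) ^ n ∣ m * m - 1) : (p : ℤ) ^ n ∣ m - 1 ∨ (p : ℤ) ^ n ∣ m + 1 := by
  have hpZ : Prime (p : ℤ) := Nat.prime_iff_prime_int.mp hp
  rw [show m * m - 1 = (m - 1) * (m + 1) by ring] at h
  by_cases hsub : (p : ℤ) ∣ m - 1
  · have hadd : ¬ (p : ℤ) ∣ m + 1 := fun hadd => by
      have h2 : p ∣ 2 := Int.natCast_dvd_natCast.mp (by simpa using dvd_sub hadd hsub)
      obtain rfl := (Nat.prime_dvd_prime_iff_eq hp Nat.prime_two).mp h2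
      exact absurd hodd (by decide)
    exact .inl ((hpZ.coprime_iff_not_dvd.mpr hadd).pow_left.dvd_of_dvd_mul_right h)
  · exact .inr ((hpZ.coprime_iff_not_dvd.mpr hsub).pow_left.dvd_of_dvd_mul_left h)

theorem IsCyclic.mulAut_apply_eq_inv {G : Type*} [Group G] [IsCyclic G] {p n : ℕ}
    (hp : p.Prime) (hodd : Odd p) (hcard : Nat.card G = p ^ n) {σ : MulAut G}
    (hσ2 : σ ^ 2 = 1) (hσ : σ ≠ 1) (a : G) : σ a = a⁻¹ := by
  obtain ⟨m, hm⟩ : ∃ m : ℤ, ∀ g : G, σ g = g ^ m := MonoidHom.map_cyclic σ.toMonoidHom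
  have hexp : (Monoid.exponent G : ℤ) = (p : ℤ) ^ n := by
    rw [IsCyclic.exponent_eq_card, hcard]; push_cast; rfl
  have hsq : (p : ℤ) ^ n ∣ m * m - 1 := by
    rw [← hexp, Group.exponent_dvd_sub_iff_zpow_eq_zpow]
    intro g
    rw [zpow_one, zpow_mul, ← hm, ← hm, ← MulAut.mul_apply, ← pow_two, hσ2, MulAut.one_apply]
  have hne : ¬ (p : ℤ) ^ n ∣ m - 1 := by
    rw [← hexp, Group.exponent_dvd_sub_iff_zpow_eq_zpow]
    refine fun h => hσ (MulEquiv.ext fun g => ?_)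
    rw [MulAut.one_apply, hm, h, zpow_one]
  have hneg := (Int.prime_pow_dvd_sub_one_or_add_one hp hodd hsq).resolve_left hne
  rw [← hexp, ← sub_neg_eq_add, Group.exponent_dvd_sub_iff_zpow_eq_zpow] at hneg
  rw [← zpow_neg_one, ← hneg]
  exact hm a

theorem IsCyclic.mulAut_of_zmod_two_apply_eq_inv {G : Type*} [Group G] [IsCyclic G] {p n : ℕ}
    (hp : p.Prime) (hodd : Odd p) (hcard : Nat.card G = p ^ n)
    {φ : Multiplicative (ZMod 2) →* MulAut G} (hφ : φ ≠ 1) (a : G) : φ (.ofAdd 1) a = a⁻¹ := by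
  refine IsCyclic.mulAut_apply_eq_inv hp hodd hcard ?_ (fun h => hφ <| MonoidHom.ext fun x => ?_) a
  · rw [← map_pow, show (Multiplicative.ofAdd 1 : Multiplicative (ZMod 2)) ^ 2 = 1 by decide,
      map_one]
  · obtain rfl | rfl : x = 1 ∨ x = .ofAdd 1 := by revert x; decide
    exacts [map_one φ, h]

theorem SemidirectProduct.sum_orderOf_of_apply_eq_inv {N : Type*} [Group N] [Fintype N]
    {φ : Multiplicative (ZMod 2) →* MulAut N} (hφ : ∀ a, φ (.ofAdd 1) a = a⁻¹) :
    ∑ x : N ⋊[φ] Multiplicative (ZMod 2), orderOf x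
      = ∑ a : N, orderOf a + 2 * Nat.card N := by
  have horder_inl (a : N) : orderOf (⟨a, 1⟩ : N ⋊[φ] Multiplicative (ZMod 2)) = orderOf a :=
    orderOf_injective inl inl_injective a
  have horder_reflection (a : N) :
      orderOf (⟨a, .ofAdd 1⟩ : N ⋊[φ] Multiplicative (ZMod 2)) = 2 := by
    refine orderOf_eq_prime ?_ fun h => by simpa using congrArg right h
    refine SemidirectProduct.ext ?_ ?_
    · simp [pow_two, hφ]
    · simp only [pow_two, mul_right, one_right]
      decide
  have huniv : (univ : Finset (Multiplicative (ZMod 2))) = {1, .ofAdd 1} := by decide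
  rw [← equivProd.symm.sum_comp, Fintype.sum_prod_type, Nat.card_eq_fintype_card, mul_comm,
    ← card_univ, ← smul_eq_mul, ← sum_const, ← sum_add_distrib]
  refine sum_congr rfl fun a _ => ?_
  rw [huniv, sum_pair (by decide)]
  exact congrArg₂ (· + ·) (horder_inl a) (horder_reflection a)

theorem sum_orderOf_eq_sum_divisors (α : Type*) [Group α] [Fintype α] [IsCyclic α] :
    ∑ x : α, orderOf x = ∑ d ∈ (Fintype.card α).divisors, d * d.totient := by
  classical
  rw [← sum_fiberwise_of_maps_to (g := orderOf) (t := (Fintype.card α).divisors)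
      fun x _ => Nat.mem_divisors.mpr ⟨orderOf_dvd_card, Fintype.card_ne_zero⟩]
  refine sum_congr rfl fun d hd => ?_
  rw [sum_congr rfl fun x hx => (mem_filter.mp hx).2, sum_const, smul_eq_mul, mul_comm,
    IsCyclic.card_orderOf_eq_totient (Nat.mem_divisors.mp hd).1]

theorem Nat.sum_divisors_prime_pow_mul_totient {p : ℕ} (hp : p.Prime) (n : ℕ) :
    (∑ d ∈ (p ^ n).divisors, d * d.totient) * (p + 1) = p ^ (2 * n + 1) + 1 := by
  rw [Nat.sum_divisors_prime_pow hp]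
  induction n with
  | zero => simp
  | succ m ih =>
    rw [sum_range_succ, add_mul, ih, Nat.totient_prime_pow_succ hp]
    obtain ⟨k, rfl⟩ : ∃ k, p = k + 1 := ⟨p - 1, (Nat.sub_add_cancel hp.one_le).symm⟩
    rw [Nat.add_sub_cancel]
    ring

theorem psi_ratio_le_and_eq_iff {P Q S : ℚ} (hP : 3 ≤ P) (hPQ : P ≤ Q)
    (hS : S * (P + 1) = P * Q ^ 2 + 2 * P * Q + 2 * Q + 1) :
    S / (2 * Q) ^ 2 ≤ 13 / 36 ∧ (S / (2 * Q) ^ 2 = 13 / 36 ↔ Q = 3) := by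
  have hQ : 0 < Q := by linarith
  have hQ3 : 0 ≤ Q - 3 := by linarith
  have hQP : 0 ≤ Q - P := by linarith
  -- the numerator is 13 (2Q)² (P + 1) - 36 S (P + 1)
  have hD : 13 / 36 - S / (2 * Q) ^ 2
      = (16 * P * Q * (Q - 3) + 24 * Q * (Q - P) + 4 * (7 * Q + 3) * (Q - 3))
        / (144 * Q ^ 2 * (P + 1)) := by
    field_simp
    linear_combination (-5184) * hS
  have hterm₁ : 0 ≤ 16 * P * Q * (Q - 3) := by positivity
  have hterm₂ : 0 ≤ 24 * Q * (Q - P) := by positivity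
  have hden : 0 < 144 * Q ^ 2 * (P + 1) := by positivity
  refine ⟨sub_nonneg.mp (hD ▸ div_nonneg (by positivity) hden.le), ?_⟩
  rw [eq_comm, ← sub_eq_zero, hD, div_eq_zero_iff, or_iff_left hden.ne']
  constructor
  · intro h
    nlinarith
  · rintro rfl
    obtain rfl : P = 3 := by linarith
    norm_num

/-- For a non-trivial semidirect product G = C_{p^n} ⋊ C_2 with p an odd prime:
ψ(G)·(p+1) = p^{2n+1} + 2p^{n+1} + 2p^n + 1, ψ''(G) ≤ 13/36,
with equality iff p = 3 and n = 1. -/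
theorem psi_semidirect_C2 (p n : ℕ) (hp : p.Prime) (hodd : Odd p) (hn : 0 < n)
    [NeZero (p ^ n)]
    (φ : Multiplicative (ZMod 2) →* MulAut (Multiplicative (ZMod (p ^ n))))
    (hφ : φ ≠ 1) :
    (∑ x : Multiplicative (ZMod (p ^ n)) ⋊[φ] Multiplicative (ZMod 2), orderOf x) * (p + 1)
        = p ^ (2 * n + 1) + 2 * p ^ (n + 1) + 2 * p ^ n + 1 ∧
    ((∑ x : Multiplicative (ZMod (p ^ n)) ⋊[φ] Multiplicative (ZMod 2), orderOf x : ℕ) : ℚ) /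
        (Fintype.card (Multiplicative (ZMod (p ^ n)) ⋊[φ] Multiplicative (ZMod 2)) : ℚ) ^ 2
        ≤ 13 / 36 ∧
    (((∑ x : Multiplicative (ZMod (p ^ n)) ⋊[φ] Multiplicative (ZMod 2), orderOf x : ℕ) : ℚ) /
        (Fintype.card (Multiplicative (ZMod (p ^ n)) ⋊[φ] Multiplicative (ZMod 2)) : ℚ) ^ 2
        = 13 / 36 ↔ p = 3 ∧ n = 1) := by
  have hcardN : Nat.card (Multiplicative (ZMod (p ^ n))) = p ^ n := by simp
  have hinv := IsCyclic.mulAut_of_zmod_two_apply_eq_inv hp hodd hcardN hφ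
  have hψ : (∑ x : Multiplicative (ZMod (p ^ n)) ⋊[φ] Multiplicative (ZMod 2), orderOf x) * (p + 1)
      = p ^ (2 * n + 1) + 2 * p ^ (n + 1) + 2 * p ^ n + 1 := by
    rw [SemidirectProduct.sum_orderOf_of_apply_eq_inv hinv, sum_orderOf_eq_sum_divisors,
      ← Nat.card_eq_fintype_card, hcardN, add_mul, Nat.sum_divisors_prime_pow_mul_totient hp]
    ring
  have hcard : Fintype.card (Multiplicative (ZMod (p ^ n)) ⋊[φ] Multiplicative (ZMod 2))
      = 2 * p ^ n := by
    rw [← Nat.card_eq_fintype_card, SemidirectProduct.card, hcardN]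
    simp [mul_comm]
  have hp3 : 3 ≤ p := by
    obtain ⟨k, rfl⟩ := hodd
    have := hp.two_le
    omega
  generalize (∑ x : Multiplicative (ZMod (p ^ n)) ⋊[φ] Multiplicative (ZMod 2), orderOf x) = S
    at hψ ⊢
  obtain ⟨hle, heq⟩ := psi_ratio_le_and_eq_iff (P := p) (Q := (p : ℚ) ^ n) (S := S)
    (by exact_mod_cast hp3) (by exact_mod_cast Nat.le_self_pow hn.ne' p)
    (by have := congrArg (Nat.cast : ℕ → ℚ) hψ; push_cast at this; linear_combination this)
  have hpow : (p : ℚ) ^ n = 3 ↔ p = 3 ∧ n = 1 := by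
    rw [← Nat.prime_three.pow_eq_iff]
    norm_cast
  rw [hcard, ← hpow]
  push_cast
  exact ⟨hψ, hle, heq⟩
end

section
/- If G is a finite group with ψ(G)/|G|² > 7/16, then G is cyclic. -/
/-- If ψ''(G) > 7/16 then G is cyclic. -/
theorem cyclic_of_psi'' (G : Type*) [Group G] [Fintype G]
    (h : ((∑ x : G, orderOf x : ℕ) : ℚ) / (Fintype.card G : ℚ) ^ 2 > 7 / 16) :
    IsCyclic G := by
  classical
  by_contra hnc
  set n := Fintype.card G with hn_def
  set S := ∑ x : G, orderOf x with hS_def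
  have hn : 0 < n := Fintype.card_pos
  have key : 7 * n ^ 2 < 16 * S := by
    have h2 : (7 : ℚ) * (n : ℚ) ^ 2 < 16 * (S : ℚ) := by
      rw [gt_iff_lt, div_lt_div_iff₀ (by norm_num) (by positivity)] at h
      linarith
    exact_mod_cast h2
  obtain ⟨x₀, -, hmax⟩ := Finset.exists_max_image (Finset.univ : Finset G) orderOf
    ⟨1, Finset.mem_univ 1⟩
  set m := orderOf x₀ with hm_def
  have hmax' : ∀ y : G, orderOf y ≤ m := fun y => hmax y (Finset.mem_univ y)
  have hm0 : 0 < m := orderOf_pos x₀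
  have hSle : S ≤ n * m := by
    calc S ≤ (Finset.univ : Finset G).card • m :=
        Finset.sum_le_card_nsmul _ _ m (fun y _ => hmax' y)
      _ = n * m := by simp [hn_def, mul_comm]
  obtain ⟨k, hk⟩ : m ∣ n := orderOf_dvd_card
  have h2 : 7 * n < 16 * m := by
    refine Nat.lt_of_mul_lt_mul_left (a := n) ?_
    calc n * (7 * n) = 7 * n ^ 2 := by ring
      _ < 16 * S := key
      _ ≤ 16 * (n * m) := Nat.mul_le_mul_left 16 hSle
      _ = n * (16 * m) := by ring
  have h7 : 7 * k < 16 := by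
    refine Nat.lt_of_mul_lt_mul_left (a := m) ?_
    calc m * (7 * k) = 7 * n := by rw [hk]; ring
      _ < 16 * m := h2
      _ = m * 16 := by ring
  have hk0 : 0 < k := by
    rcases Nat.eq_zero_or_pos k with rfl | hpos
    · omega
    · exact hpos
  have hk2 : k ≤ 2 := by omega
  interval_cases k
  · exact hnc (isCyclic_of_orderOf_eq_card x₀ (by rw [Nat.card_eq_fintype_card]; omega))
  · -- n = 2m
    have hn2 : n = 2 * m := by omega
    set C := Subgroup.zpowers x₀ with hC_def
    have hcardC : Nat.card C = m := Nat.card_zpowers x₀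
    have hidx : C.index = 2 := by
      have h' := Subgroup.card_mul_index C
      rw [hcardC, Nat.card_eq_fintype_card] at h'
      refine Nat.eq_of_mul_eq_mul_left hm0 ?_
      rw [h', ← hn_def, hn2, Nat.mul_comm]
    have hfiltC : (Finset.univ.filter (· ∈ C)).card = m := by
      rw [← hcardC, Nat.card_eq_fintype_card, Fintype.card_subtype]
    have hsplit : S = ∑ y ∈ Finset.univ.filter (· ∈ C), orderOf y
        + ∑ y ∈ Finset.univ.filter (¬ · ∈ C), orderOf y := by
      rw [hS_def, ← Finset.sum_filter_add_sum_filter_not Finset.univ (· ∈ C)]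
    have hcard_out : (Finset.univ.filter (¬ · ∈ C)).card = m := by
      have := Finset.card_filter_add_card_filter_not
        (s := (Finset.univ : Finset G)) (p := (· ∈ C))
      simp only [Finset.card_univ] at this
      omega
    rcases Nat.even_or_odd m with ⟨t, ht⟩ | hodd
    · -- m = 2t even
      have hm2t : m = 2 * t := by omega
      have ht0 : 0 < t := by omega
      set D := Subgroup.zpowers (x₀ ^ 2) with hD_def
      have hordsq : orderOf (x₀ ^ 2) = t := by
        have hg : Nat.gcd (2 * t) 2 = 2 := by
          rw [Nat.gcd_comm]; exact Nat.gcd_eq_left ⟨t, rfl⟩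
        rw [orderOf_pow, ← hm_def, hm2t, hg]
        omega
      have hDC : D ≤ C := by
        rw [hD_def, hC_def, Subgroup.zpowers_le]
        exact Subgroup.pow_mem _ (Subgroup.mem_zpowers x₀) 2
      have hfiltD : (Finset.univ.filter (· ∈ D)).card = t := by
        rw [← hordsq, ← Nat.card_zpowers (x₀ ^ 2), Nat.card_eq_fintype_card,
          Fintype.card_subtype]
      have hsubset : Finset.univ.filter (· ∈ D) ⊆ Finset.univ.filter (· ∈ C) := by
        intro y hy
        simp only [Finset.mem_filter] at hy ⊢
        exact ⟨hy.1, hDC hy.2⟩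
      have hsumD : ∑ y ∈ Finset.univ.filter (· ∈ D), orderOf y ≤ t * t := by
        calc ∑ y ∈ Finset.univ.filter (· ∈ D), orderOf y
            ≤ (Finset.univ.filter (· ∈ D)).card • t := by
              refine Finset.sum_le_card_nsmul _ _ t (fun y hy => ?_)
              have hyD : y ∈ D := (Finset.mem_filter.1 hy).2
              have : orderOf y ∣ t := hordsq ▸ orderOf_dvd_of_mem_zpowers hyD
              exact Nat.le_of_dvd ht0 this
          _ = t * t := by rw [hfiltD, smul_eq_mul]
      have hsdiff_card : (Finset.univ.filter (· ∈ C) \ Finset.univ.filter (· ∈ D)).card = t := by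
        rw [Finset.card_sdiff_of_subset hsubset, hfiltC, hfiltD]; omega
      have hsum_sdiff : ∑ y ∈ Finset.univ.filter (· ∈ C) \ Finset.univ.filter (· ∈ D),
          orderOf y ≤ 2 * (t * t) := by
        calc ∑ y ∈ Finset.univ.filter (· ∈ C) \ Finset.univ.filter (· ∈ D), orderOf y
            ≤ (Finset.univ.filter (· ∈ C) \ Finset.univ.filter (· ∈ D)).card • m :=
              Finset.sum_le_card_nsmul _ _ m (fun y _ => hmax' y)
          _ = 2 * (t * t) := by rw [hsdiff_card, smul_eq_mul, hm2t]; ring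
      have hsumC : ∑ y ∈ Finset.univ.filter (· ∈ C), orderOf y ≤ 3 * (t * t) := by
        rw [← Finset.sum_sdiff hsubset]
        calc ∑ y ∈ Finset.univ.filter (· ∈ C) \ Finset.univ.filter (· ∈ D), orderOf y
              + ∑ y ∈ Finset.univ.filter (· ∈ D), orderOf y
            ≤ 2 * (t * t) + t * t := Nat.add_le_add hsum_sdiff hsumD
          _ = 3 * (t * t) := by ring
      have hsum_out : ∑ y ∈ Finset.univ.filter (¬ · ∈ C), orderOf y ≤ 4 * (t * t) := by
        calc ∑ y ∈ Finset.univ.filter (¬ · ∈ C), orderOf y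
            ≤ (Finset.univ.filter (¬ · ∈ C)).card • m :=
              Finset.sum_le_card_nsmul _ _ m (fun y _ => hmax' y)
          _ = 4 * (t * t) := by rw [hcard_out, smul_eq_mul, hm2t]; ring
      have hnn : n ^ 2 = 16 * (t * t) := by rw [hn2, hm2t]; ring
      linarith [key, hsplit, hsumC, hsum_out, hnn]
    · -- m odd
      have hout : ∀ y : G, y ∉ C → 3 * orderOf y ≤ 2 * m := by
        intro y hyC
        have hsq : y ^ 2 ∈ C := Subgroup.sq_mem_of_index_two hidx y
        have hyne : ¬ Odd (orderOf y) := by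
          intro ⟨j, hj⟩
          apply hyC
          have hmem : y ∈ Subgroup.zpowers (y ^ 2) := by
            refine ⟨(j + 1 : ℤ), ?_⟩
            show (y ^ 2) ^ ((j : ℤ) + 1) = y
            have hcast : ((j : ℤ) + 1) = ((j + 1 : ℕ) : ℤ) := by push_cast; ring
            rw [hcast, zpow_natCast, ← pow_mul]
            have h21 : 2 * (j + 1) = orderOf y + 1 := by omega
            rw [h21, pow_succ, pow_orderOf_eq_one, one_mul]
          exact Subgroup.zpowers_le.mpr hsq hmem
        obtain ⟨s, hs⟩ := Nat.not_odd_iff_even.mp hyne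
        have h2s : orderOf y = 2 * s := by omega
        have hordsq2 : orderOf (y ^ 2) = s := by
          have hg : Nat.gcd (2 * s) 2 = 2 := by
            rw [Nat.gcd_comm]; exact Nat.gcd_eq_left ⟨s, rfl⟩
          rw [orderOf_pow, h2s, hg]
          omega
        have hsm : s ∣ m := hordsq2 ▸ orderOf_dvd_of_mem_zpowers hsq
        have hsne : s ≠ m := by
          intro hsm'
          exact hnc (isCyclic_of_orderOf_eq_card y (by rw [Nat.card_eq_fintype_card]; omega))
        obtain ⟨q, hq⟩ := hsm
        have hs0 : 0 < s := by
          have := orderOf_pos y; omega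
        have hq3 : 3 ≤ q := by
          rcases Nat.even_or_odd q with ⟨u, hu⟩ | hqodd
          · exfalso
            have hqe : Even q := ⟨u, hu⟩
            have hme : Even m := hq ▸ hqe.mul_left s
            exact (Nat.not_odd_iff_even.mpr hme) hodd
          · have hq1 : q ≠ 1 := fun hq1 => hsne (by subst hq1; omega)
            have hq0 : q ≠ 0 := by rintro rfl; omega
            obtain ⟨u, hu⟩ := hqodd
            omega
        nlinarith
      have hsumC : ∑ y ∈ Finset.univ.filter (· ∈ C), orderOf y ≤ m * m := by
        calc ∑ y ∈ Finset.univ.filter (· ∈ C), orderOf y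
            ≤ (Finset.univ.filter (· ∈ C)).card • m :=
              Finset.sum_le_card_nsmul _ _ m (fun y _ => hmax' y)
          _ = m * m := by rw [hfiltC, smul_eq_mul]
      have hsum_out : 3 * ∑ y ∈ Finset.univ.filter (¬ · ∈ C), orderOf y ≤ 2 * (m * m) := by
        calc 3 * ∑ y ∈ Finset.univ.filter (¬ · ∈ C), orderOf y
            = ∑ y ∈ Finset.univ.filter (¬ · ∈ C), 3 * orderOf y := by
              rw [Finset.mul_sum]
          _ ≤ (Finset.univ.filter (¬ · ∈ C)).card • (2 * m) := by
              refine Finset.sum_le_card_nsmul _ _ (2 * m) (fun y hy => ?_)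
              exact hout y (by simpa using (Finset.mem_filter.1 hy).2)
          _ = 2 * (m * m) := by rw [hcard_out, smul_eq_mul]; ring
      have hnn : n ^ 2 = 4 * (m * m) := by rw [hn2]; ring
      linarith [key, hsplit, hsumC, hsum_out, hnn]
end

section
/- If G is a finite group with ψ(G)/|G|² > 27/64, then G is abelian. -/
/-!
Let `n = |G|` with `G` non-abelian, so no element has order `n`; every other element has order
`n/2` or at most `n/3`. Hence `ψ(G) > 27n²/64` forces more than `n/2` elements of order `n/2`,
so there are two distinct cyclic subgroups `A = ⟨a⟩`, `B = ⟨b⟩` of index 2. Their intersection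
`Z` has index 4 and contains every square, and it is central since `A` and `B` are abelian and
generate `G`. If `|Z|` is odd, every commutator is an element of `Z` of order dividing 2, so `G`
is abelian. If `|Z| = q` is even, every element has order dividing `2q`, and `ψ(Z) ≤ 3q²/4`
since `Z` is cyclic, whence `ψ(G) ≤ 3q²/4 + 3q · 2q = 27n²/64`.
-/

open Finset Subgroup
open scoped commutatorElement

noncomputable def sumOrderOf (G : Type*) [Group G] [Fintype G] : ℕ := ∑ x : G, orderOf x

lemma two_mul_eq_or_three_mul_le {d n : ℕ} (hd : d ∣ n) (hn : 0 < n) (hne : d ≠ n) :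
    2 * d = n ∨ 3 * d ≤ n := by
  obtain ⟨c, rfl⟩ := hd
  rcases c with _ | _ | _ | c
  · simp at hn
  · simp at hne
  · left; ring
  · right; nlinarith

section

variable {G : Type*} [Group G]

section Counting

variable [Fintype G]

lemma sumOrderOf_le_card_sq : sumOrderOf G ≤ Nat.card G ^ 2 := by
  calc sumOrderOf G ≤ #(univ : Finset G) • Nat.card G :=
        sum_le_card_nsmul _ _ _ fun x _ => orderOf_le_card
    _ = Nat.card G ^ 2 := by rw [card_univ, ← Nat.card_eq_fintype_card, smul_eq_mul, sq]

lemma sumOrderOf_le_of_pow_eq_one (K : Subgroup G) [DecidablePred (· ∈ K)] {e : ℕ}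
    (he : 0 < e) (hG : ∀ x : G, x ^ e = 1) :
    sumOrderOf G ≤ sumOrderOf K + (Nat.card G - Nat.card K) * e := by
  have hK : ∑ x ∈ univ.filter (· ∈ K), orderOf x = sumOrderOf K := by
    rw [sumOrderOf, sum_subtype (p := (· ∈ K)) _ (fun x => by simp)]
    exact sum_congr rfl fun x _ => orderOf_coe x
  have hcompl : #(univ.filter (· ∉ K)) = Nat.card G - Nat.card K := by
    rw [← Fintype.card_subtype, Fintype.card_subtype_compl, Nat.card_eq_fintype_card,
      Nat.card_eq_fintype_card]
  rw [sumOrderOf, ← sum_filter_add_sum_filter_not univ (· ∈ K), hK, ← hcompl]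
  gcongr
  exact sum_le_card_nsmul _ _ _ fun x _ => orderOf_le_of_pow_eq_one he (hG x)

lemma four_mul_sumOrderOf_le_of_isCyclic [IsCyclic G] (heven : Even (Nat.card G)) :
    4 * sumOrderOf G ≤ 3 * Nat.card G ^ 2 := by
  classical
  obtain ⟨r, hr⟩ := heven
  obtain ⟨g, hg⟩ := IsCyclic.exists_ofOrder_eq_natCard (α := G)
  have hK : Nat.card (zpowers (g ^ 2)) = r := by
    rw [Nat.card_zpowers, orderOf_pow_of_dvd two_ne_zero ⟨r, by omega⟩, hg, hr]
    omega
  have hsplit := sumOrderOf_le_of_pow_eq_one (zpowers (g ^ 2)) Nat.card_pos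
    fun x => pow_card_eq_one'
  have hsub := sumOrderOf_le_card_sq (G := zpowers (g ^ 2))
  rw [hK, hr, Nat.add_sub_cancel] at hsplit
  rw [hK] at hsub
  rw [hr]
  nlinarith

lemma six_mul_sumOrderOf_le (hG : ∀ x : G, orderOf x ≠ Nat.card G) :
    6 * sumOrderOf G ≤ Nat.card G * (2 * Nat.card G + #{x : G | 2 * orderOf x = Nat.card G}) := by
  set n := Nat.card G
  have hpt (x : G) : 6 * orderOf x ≤ 2 * n + n * if 2 * orderOf x = n then 1 else 0 := by
    rcases two_mul_eq_or_three_mul_le (orderOf_dvd_natCard x) Nat.card_pos (hG x) with h | h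
    · rw [if_pos h]; omega
    · split_ifs <;> omega
  calc 6 * sumOrderOf G = ∑ x : G, 6 * orderOf x := mul_sum _ _ _
    _ ≤ ∑ x : G, (2 * n + n * if 2 * orderOf x = n then 1 else 0) := sum_le_sum fun x _ => hpt x
    _ = n * (2 * n + #{x | 2 * orderOf x = n}) := by
      rw [sum_add_distrib, sum_const, card_univ, ← mul_sum, ← card_filter,
        ← Nat.card_eq_fintype_card, smul_eq_mul]
      ring

lemma exists_two_mul_orderOf_eq_of_card_lt
    (h : Nat.card G < 2 * #{x : G | 2 * orderOf x = Nat.card G}) :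
    ∃ a b : G, 2 * orderOf a = Nat.card G ∧ 2 * orderOf b = Nat.card G ∧ b ∉ zpowers a := by
  classical
  obtain ⟨a, ha⟩ : ({x : G | 2 * orderOf x = Nat.card G} : Finset G).Nonempty := by
    rw [← card_pos]; omega
  rw [mem_filter] at ha
  by_contra! hS
  have hsub : ({x : G | 2 * orderOf x = Nat.card G} : Finset G) ⊆ (zpowers a : Set G).toFinset :=
    fun b hb => by simpa using hS a b ha.2 (mem_filter.mp hb).2
  have := card_le_card hsub
  rw [← Nat.card_eq_card_toFinset, SetLike.coe_sort_coe, Nat.card_zpowers] at this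
  omega

end Counting

namespace Subgroup

variable {H K : Subgroup G}

lemma index_eq_two_of_two_mul_card_eq [Finite G] (h : 2 * Nat.card H = Nat.card G) :
    H.index = 2 := by
  have hpos : 0 < Nat.card H := Nat.card_pos
  have := H.card_mul_index
  rw [← h, mul_comm 2] at this
  exact Nat.eq_of_mul_eq_mul_left hpos this

lemma sup_eq_top_of_index_eq_two (hH : H.index = 2) (hK : ¬K ≤ H) : H ⊔ K = ⊤ := by
  have hmul := relIndex_mul_index (le_sup_left : H ≤ H ⊔ K)
  rw [hH] at hmul
  have hrel : H.relIndex (H ⊔ K) ≠ 1 := fun h1 => hK (le_sup_right.trans (relIndex_eq_one.mp h1))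
  rw [← index_eq_one]
  rcases (Nat.dvd_prime Nat.prime_two).mp (Dvd.intro_left _ hmul) with h | h
  · exact h
  · rw [h] at hmul; omega

lemma index_inf_eq_four (hH : H.index = 2) (hK : K.index = 2) (hKH : ¬K ≤ H) :
    (H ⊓ K).index = 4 := by
  have := normal_of_index_eq_two hK
  rw [← relIndex_mul_index inf_le_left, inf_relIndex_left, ← relIndex_sup_right,
    sup_eq_top_of_index_eq_two hH hKH, relIndex_top_right, hH, hK]

lemma inf_le_center_of_sup_eq_top [IsMulCommutative H] [IsMulCommutative K] (h : H ⊔ K = ⊤) :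
    H ⊓ K ≤ center G := by
  have hcen : H ⊔ K ≤ centralizer (H ⊓ K : Subgroup G) :=
    sup_le ((le_centralizer H).trans (centralizer_le inf_le_left))
      ((le_centralizer K).trans (centralizer_le inf_le_right))
  rw [h, top_le_iff, centralizer_eq_top_iff_subset] at hcen
  exact hcen

end Subgroup

lemma commute_of_sq_mem_of_odd_card {Z : Subgroup G} (hZ : Z ≤ center G)
    (hodd : Odd (Nat.card Z)) (hsq : ∀ x : G, x ^ 2 ∈ Z) (x y : G) : Commute x y := by
  have hcen : ∀ z ∈ Z, ∀ g : G, Commute g z := fun z hz g => mem_center_iff.mp (hZ hz) g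
  set c := ⁅x, y⁆ with hc_def
  have hc : c ∈ Z := by
    have hx2 := hcen _ (inv_mem (hsq x)) y⁻¹
    have : c = (x * y) ^ 2 * (x ^ 2)⁻¹ * (y ^ 2)⁻¹ :=
      calc c = (x * y) ^ 2 * (y⁻¹ * (x ^ 2)⁻¹) * y⁻¹ := by
            rw [hc_def, commutatorElement_def, sq, sq]; group
        _ = (x * y) ^ 2 * ((x ^ 2)⁻¹ * y⁻¹) * y⁻¹ := by rw [hx2.eq]
        _ = (x * y) ^ 2 * (x ^ 2)⁻¹ * (y ^ 2)⁻¹ := by simp only [sq]; group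
    rw [this]
    exact mul_mem (mul_mem (hsq _) (inv_mem (hsq x))) (inv_mem (hsq y))
  -- conjugating `y ^ 2` by `x` multiplies it by `c ^ 2`, but `y ^ 2` is central
  have hc2 : c ^ 2 = 1 := by
    refine mul_eq_right.mp (?_ : c ^ 2 * y ^ 2 = y ^ 2)
    calc c ^ 2 * y ^ 2 = (c * y) ^ 2 := ((hcen c hc y).symm.mul_pow 2).symm
      _ = (x * y * x⁻¹) ^ 2 := by rw [hc_def, commutatorElement_def]; group
      _ = x * y ^ 2 * x⁻¹ := by simp only [sq]; group
      _ = y ^ 2 := by rw [(hcen _ (hsq y) x).eq, mul_inv_cancel_right]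
  have hord : orderOf c ∣ Nat.gcd 2 (Nat.card Z) :=
    Nat.dvd_gcd (orderOf_dvd_of_pow_eq_one hc2) (Z.orderOf_dvd_natCard hc)
  rw [Nat.coprime_two_left.mpr hodd, Nat.dvd_one, orderOf_eq_one_iff] at hord
  exact commutatorElement_eq_one_iff_commute.mp hord

lemma sumOrderOf_le_of_sq_mem [Fintype G] (Z : Subgroup G) [DecidablePred (· ∈ Z)] [IsCyclic Z]
    (heven : Even (Nat.card Z)) (hidx : Z.index = 4) (hsq : ∀ x : G, x ^ 2 ∈ Z) :
    64 * sumOrderOf G ≤ 27 * Nat.card G ^ 2 := by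
  set q := Nat.card Z
  have hn : Nat.card G = 4 * q := by rw [← Z.card_mul_index, hidx, mul_comm]
  have hexp (x : G) : x ^ (2 * q) = 1 := by
    rw [pow_mul]
    exact orderOf_dvd_iff_pow_eq_one.mp (Z.orderOf_dvd_natCard (hsq x))
  have hG := sumOrderOf_le_of_pow_eq_one Z (Nat.mul_pos two_pos Nat.card_pos) hexp
  have hZ := four_mul_sumOrderOf_le_of_isCyclic (G := Z) heven
  rw [hn] at hG ⊢
  rw [show 4 * q - q = 3 * q by omega] at hG
  nlinarith

theorem sumOrderOf_le_of_not_commute [Fintype G] (hG : ¬∀ a b : G, a * b = b * a) :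
    64 * sumOrderOf G ≤ 27 * Nat.card G ^ 2 := by
  classical
  by_contra! hψ
  have hnc (x : G) : orderOf x ≠ Nat.card G := fun hx =>
    have := isCyclic_of_orderOf_eq_card x hx
    hG IsCyclic.commGroup.mul_comm
  have h6 := six_mul_sumOrderOf_le hnc
  obtain ⟨a, b, ha, hb, hba⟩ := exists_two_mul_orderOf_eq_of_card_lt (G := G) (by nlinarith)
  have hA := index_eq_two_of_two_mul_card_eq (H := zpowers a) (by rwa [Nat.card_zpowers])
  have hB := index_eq_two_of_two_mul_card_eq (H := zpowers b) (by rwa [Nat.card_zpowers])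
  have hBA : ¬zpowers b ≤ zpowers a := fun h => hba (h (mem_zpowers b))
  have hsq (x : G) : x ^ 2 ∈ zpowers a ⊓ zpowers b :=
    ⟨sq_mem_of_index_two hA x, sq_mem_of_index_two hB x⟩
  rcases Nat.even_or_odd (Nat.card (zpowers a ⊓ zpowers b : Subgroup G)) with heven | hodd
  · have : IsCyclic (zpowers a ⊓ zpowers b : Subgroup G) := isCyclic_of_le inf_le_left
    exact hψ.not_ge (sumOrderOf_le_of_sq_mem _ heven (index_inf_eq_four hA hB hBA) hsq)
  · have hZ := inf_le_center_of_sup_eq_top (sup_eq_top_of_index_eq_two hA hBA)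
    exact hG fun x y => (commute_of_sq_mem_of_odd_card hZ hodd hsq x y).eq

end

/-- If ψ''(G) > 27/64 then G is abelian. -/
theorem abelian_of_psi'' (G : Type*) [Group G] [Fintype G]
    (h : ((∑ x : G, orderOf x : ℕ) : ℚ) / (Fintype.card G : ℚ) ^ 2 > 27 / 64) :
    ∀ a b : G, a * b = b * a := by
  by_contra hG
  have hψ := sumOrderOf_le_of_not_commute hG
  rw [Nat.card_eq_fintype_card] at hψ
  rw [gt_iff_lt, lt_div_iff₀ (by positivity)] at h
  have : (64 * sumOrderOf G : ℚ) ≤ 27 * Fintype.card G ^ 2 := by exact_mod_cast hψ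
  rw [sumOrderOf] at this
  push_cast at h this
  linarith
end

section
/- If G is a finite group with ψ(G)/|G|² > 13/36, then G is nilpotent. -/
/-!
Let `x` have maximal order `m` and put `n = |G|`. Since `ψ(G) ≤ n m`, the hypothesis forces
`|G : ⟨x⟩| ≤ 2`. Index one means `G` is cyclic. In index two every `g ∉ ⟨x⟩` acts on `⟨x⟩` as
the same power map `x ↦ x ^ t`, and `m ∣ t² - 1`. Write `m = 2 ^ a u` with `u` odd. Either
`u ∣ t - 1`, so that `x ^ (2 ^ a)` is central with a `2`-group as quotient and `G` is nilpotent,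
or `q = gcd(u, t + 1) ≥ 3` divides `m` and is coprime to `t - 1`. Then every `g ∉ ⟨x⟩` squares
into `⟨x ^ q⟩`, of order `r = m / q`, and counting orders gives
`ψ(G) ≤ m² + m r + r² ≤ 13 n² / 36`, with equality for `G = S₃`.
-/

open Subgroup Finset

theorem Finset.sum_le_sum_add_card_sdiff_nsmul {ι M : Type*} [AddCommMonoid M] [PartialOrder M]
    [IsOrderedAddMonoid M] [DecidableEq ι] {s t : Finset ι} (hst : s ⊆ t) {f : ι → M} {b : M}
    (hb : ∀ i ∈ t \ s, f i ≤ b) : ∑ i ∈ t, f i ≤ ∑ i ∈ s, f i + #(t \ s) • b := by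
  rw [← sum_sdiff hst, add_comm]
  gcongr
  exact sum_le_card_nsmul _ _ _ hb

theorem Int.exists_dvd_two_pow_mul_or_exists_isCoprime {m : ℕ} (hm : m ≠ 0) {t : ℤ}
    (h : (m : ℤ) ∣ (t - 1) * (t + 1)) :
    (∃ a : ℕ, (m : ℤ) ∣ 2 ^ a * (t - 1)) ∨ ∃ q : ℕ, 3 ≤ q ∧ q ∣ m ∧ IsCoprime (q : ℤ) (t - 1) := by
  obtain ⟨a, u, hu, rfl⟩ := Nat.exists_eq_two_pow_mul_odd hm
  push_cast at h ⊢
  by_cases hut : (u : ℤ) ∣ t - 1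
  · exact .inl ⟨a, mul_dvd_mul_left _ hut⟩
  right
  set q := Int.gcd u (t + 1)
  have hqu : q ∣ u := Int.natCast_dvd_natCast.mp (Int.gcd_dvd_left _ _)
  have hq : Odd q := hu.of_dvd_nat hqu
  have hq_two : IsCoprime (q : ℤ) 2 :=
    Nat.isCoprime_iff_coprime.mpr (Nat.coprime_two_right.mpr hq)
  obtain ⟨c, hc⟩ : (q : ℤ) ∣ t + 1 := Int.gcd_dvd_right _ _
  have hqt : IsCoprime (q : ℤ) (t - 1) := by
    rw [show t - 1 = -2 + q * c by linarith]
    exact hq_two.neg_right.add_mul_left_right c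
  have hq1 : q ≠ 1 := fun hq1 =>
    hut ((Int.isCoprime_iff_gcd_eq_one.mpr hq1).dvd_of_dvd_mul_right (dvd_of_mul_left_dvd h))
  obtain ⟨k, hk⟩ := hq
  exact ⟨q, by omega, hqu.mul_left _, hqt⟩

theorem Group.isNilpotent_of_le_center_of_pow_mem {G : Type*} [Group G] [Finite G] {p : ℕ}
    [Fact p.Prime] {H : Subgroup G} (hH : H ≤ center G) (hpow : ∀ g : G, ∃ k, g ^ p ^ k ∈ H) :
    Group.IsNilpotent G := by
  have : H.Normal := ⟨fun n hn g => by rwa [mem_center_iff.mp (hH hn) g, mul_inv_cancel_right]⟩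
  have hp : IsPGroup p (G ⧸ H) := fun g => by
    induction g using QuotientGroup.induction_on with
    | H g =>
      obtain ⟨k, hk⟩ := hpow g
      exact ⟨k, by rwa [← QuotientGroup.mk_pow, QuotientGroup.eq_one_iff]⟩
  have := hp.isNilpotent
  exact Subgroup.isNilpotent_of_ker_le_center (QuotientGroup.mk' H) (by rwa [QuotientGroup.ker_mk'])

theorem Subgroup.exists_notMem_of_index_eq_two {G : Type*} [Group G] {H : Subgroup G}
    (hH : H.index = 2) : ∃ y, y ∉ H := by
  obtain ⟨y, -, hy⟩ := SetLike.exists_of_lt (Ne.lt_top (by rintro rfl; simp at hH) : H < ⊤)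
  exact ⟨y, hy⟩

section SumOrderOf

variable {G : Type*} [Group G] [Fintype G]

theorem sum_orderOf_le_card_mul_of_le {x : G} (hx : ∀ g : G, orderOf g ≤ orderOf x) :
    ∑ g : G, orderOf g ≤ Nat.card G * orderOf x := by
  simpa [Nat.card_eq_fintype_card] using sum_le_card_nsmul univ orderOf _ fun g _ => hx g

theorem sum_orderOf_le_of_sq_mem {H C : Subgroup G} (hHC : H ≤ C) (hsq : ∀ g ∉ C, g ^ 2 ∈ H) :
    ∑ g : G, orderOf g ≤ Nat.card H * Nat.card H + (Nat.card C - Nat.card H) * Nat.card C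
      + (Nat.card G - Nat.card C) * (2 * Nat.card H) := by
  classical
  have hcard (K : Subgroup G) : #(K : Set G).toFinset = Nat.card K :=
    (Nat.card_eq_card_toFinset _).symm
  have hle (K : Subgroup G) {g : G} (hg : g ∈ K) : orderOf g ≤ Nat.card K :=
    K.orderOf_le_card (Set.toFinite _) hg
  have hout : ∀ g ∈ univ \ (C : Set G).toFinset, orderOf g ≤ 2 * Nat.card H := by
    intro g hg
    have hgC : g ∉ C := by simpa using hg
    refine Nat.le_of_dvd (mul_pos two_pos Nat.card_pos) (orderOf_dvd_of_pow_eq_one ?_)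
    rw [pow_mul]
    exact orderOf_dvd_iff_pow_eq_one.mp (H.orderOf_dvd_natCard (hsq g hgC))
  have hHC' : (H : Set G).toFinset ⊆ (C : Set G).toFinset := Set.toFinset_subset_toFinset.mpr hHC
  calc ∑ g : G, orderOf g
      ≤ ∑ g ∈ (C : Set G).toFinset, orderOf g + (Nat.card G - Nat.card C) * (2 * Nat.card H) := by
        simpa [hcard, card_sdiff_of_subset, Nat.card_eq_fintype_card] using
          sum_le_sum_add_card_sdiff_nsmul (subset_univ _) hout
    _ ≤ ∑ g ∈ (H : Set G).toFinset, orderOf g + (Nat.card C - Nat.card H) * Nat.card C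
          + (Nat.card G - Nat.card C) * (2 * Nat.card H) := by
        gcongr
        simpa [hcard, card_sdiff_of_subset hHC'] using
          sum_le_sum_add_card_sdiff_nsmul hHC' fun g hg => hle C (by simp_all)
    _ ≤ Nat.card H * Nat.card H + (Nat.card C - Nat.card H) * Nat.card C
          + (Nat.card G - Nat.card C) * (2 * Nat.card H) := by
        gcongr
        simpa [hcard] using sum_le_card_nsmul (H : Set G).toFinset orderOf _ fun g hg =>
          hle H (by simpa using hg)

theorem thirtysix_mul_sum_orderOf_le {H C : Subgroup G} (hHC : H ≤ C) (hC : C.index = 2)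
    (hsq : ∀ g ∉ C, g ^ 2 ∈ H) {q : ℕ} (hq : 3 ≤ q) (hCH : Nat.card C = q * Nat.card H) :
    36 * ∑ g : G, orderOf g ≤ 13 * Nat.card G ^ 2 := by
  have hbound := sum_orderOf_le_of_sq_mem hHC hsq
  rw [← card_mul_index C, hC, hCH] at hbound ⊢
  obtain ⟨k, rfl⟩ : ∃ k, q = k + 3 := ⟨q - 3, by omega⟩
  set h := Nat.card H
  rw [Nat.sub_eq_of_eq_add (by ring : (k + 3) * h = (k + 2) * h + h),
    Nat.sub_eq_of_eq_add (by ring : (k + 3) * h * 2 = (k + 3) * h + (k + 3) * h)] at hbound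
  nlinarith [Nat.zero_le (h * h * k), Nat.zero_le (h * h * k * k)]

end SumOrderOf

section IndexTwo

variable {G : Type*} [Group G] {x : G}

theorem exists_conj_zpow_eq_zpow_mul (hx : (zpowers x).index = 2) :
    ∃ t : ℤ, ∀ g ∉ zpowers x, ∀ k : ℤ, g * x ^ k * g⁻¹ = x ^ (t * k) := by
  obtain ⟨y, hy⟩ := exists_notMem_of_index_eq_two hx
  obtain ⟨t, ht⟩ :=
    mem_zpowers_iff.mp ((normal_of_index_eq_two hx).conj_mem x (mem_zpowers x) y)
  refine ⟨t, fun g hg k => ?_⟩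
  obtain ⟨j, hj⟩ := mem_zpowers_iff.mp
    ((mul_mem_iff_of_index_two hx).mpr (by simp [hy, hg]) : y⁻¹ * g ∈ zpowers x)
  have hconj : g * x * g⁻¹ = x ^ t := by
    rw [ht, show g = y * x ^ j by rw [hj, mul_inv_cancel_left]]
    group
  rw [← conj_zpow, hconj, ← zpow_mul]

variable {t : ℤ} (ht : ∀ g ∉ zpowers x, ∀ k : ℤ, g * x ^ k * g⁻¹ = x ^ (t * k))
include ht

theorem orderOf_dvd_mul_sub_one_of_sq_eq {g : G} (hg : g ∉ zpowers x) {s : ℤ}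
    (hs : g ^ 2 = x ^ s) : (orderOf x : ℤ) ∣ s * (t - 1) := by
  have hfix : g * x ^ s * g⁻¹ = x ^ s := by rw [← hs]; group
  rw [orderOf_dvd_iff_zpow_eq_one, show s * (t - 1) = t * s - s by ring, zpow_sub, ← ht g hg s,
    hfix, mul_inv_cancel]

theorem zpow_mem_center_of_dvd {k : ℤ} (hk : (orderOf x : ℤ) ∣ k * (t - 1)) :
    x ^ k ∈ center G := by
  have hfix : x ^ (t * k) = x ^ k := by
    rw [show t * k = k * (t - 1) + k by ring, zpow_add, orderOf_dvd_iff_zpow_eq_one.mp hk,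
      one_mul]
  refine mem_center_iff.mpr fun g => ?_
  by_cases hg : g ∈ zpowers x
  · obtain ⟨j, rfl⟩ := mem_zpowers_iff.mp hg
    exact (Commute.zpow_zpow_self x j k).eq
  · rw [← mul_inv_eq_iff_eq_mul, ht g hg k, hfix]

variable (hx : (zpowers x).index = 2)
include hx

theorem orderOf_dvd_sub_one_mul_add_one : (orderOf x : ℤ) ∣ (t - 1) * (t + 1) := by
  obtain ⟨y, hy⟩ := exists_notMem_of_index_eq_two hx
  obtain ⟨s, hs⟩ := mem_zpowers_iff.mp (sq_mem_of_index_two hx y)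
  have hfix : y ^ 2 * x * (y ^ 2)⁻¹ = x := by rw [← hs]; group
  have hconj : y ^ 2 * x * (y ^ 2)⁻¹ = x ^ (t * t) := by
    rw [show y ^ 2 * x * (y ^ 2)⁻¹ = y * (y * x ^ (1 : ℤ) * y⁻¹) * y⁻¹ by rw [sq]; group,
      ht y hy 1, mul_one, ht y hy t]
  rw [show (t - 1) * (t + 1) = t * t - 1 by ring, orderOf_dvd_iff_zpow_eq_one, zpow_sub,
    ← hconj, hfix, zpow_one, mul_inv_cancel]

theorem isNilpotent_of_dvd_two_pow_mul [Finite G] {a : ℕ}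
    (ha : (orderOf x : ℤ) ∣ 2 ^ a * (t - 1)) : Group.IsNilpotent G := by
  refine Group.isNilpotent_of_le_center_of_pow_mem (p := 2)
    (zpowers_le.mpr (zpow_mem_center_of_dvd ht ha)) fun g => ⟨a + 1, ?_⟩
  obtain ⟨s, hs⟩ := mem_zpowers_iff.mp (sq_mem_of_index_two hx g)
  rw [pow_succ', pow_mul, ← hs, ← zpow_natCast, ← zpow_mul, mul_comm, zpow_mul]
  exact zpow_mem (by push_cast; exact mem_zpowers _) s

theorem thirtysix_mul_sum_orderOf_le_of_isCoprime [Fintype G] {q : ℕ} (hq : 3 ≤ q)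
    (hqm : q ∣ orderOf x) (hqt : IsCoprime (q : ℤ) (t - 1)) :
    36 * ∑ g : G, orderOf g ≤ 13 * Nat.card G ^ 2 := by
  refine thirtysix_mul_sum_orderOf_le (H := zpowers (x ^ q))
    (zpowers_le.mpr (pow_mem (mem_zpowers x) q)) hx (fun g hg => ?_) hq ?_
  · obtain ⟨s, hs⟩ := mem_zpowers_iff.mp (sq_mem_of_index_two hx g)
    obtain ⟨j, rfl⟩ := hqt.dvd_of_dvd_mul_right
      ((Int.natCast_dvd_natCast.mpr hqm).trans (orderOf_dvd_mul_sub_one_of_sq_eq ht hg hs.symm))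
    rw [← hs, zpow_mul, zpow_natCast]
    exact zpow_mem (mem_zpowers _) j
  · rw [Nat.card_zpowers, Nat.card_zpowers, orderOf_pow_of_dvd (by omega) hqm,
      Nat.mul_div_cancel' hqm]

end IndexTwo

/-- If ψ''(G) > 13/36 then G is nilpotent. -/
theorem nilpotent_of_psi'' (G : Type*) [Group G] [Fintype G]
    (h : ((∑ x : G, orderOf x : ℕ) : ℚ) / (Fintype.card G : ℚ) ^ 2 > 13 / 36) :
    Group.IsNilpotent G := by
  have hψ : 13 * Nat.card G ^ 2 < 36 * ∑ g : G, orderOf g := by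
    rw [gt_iff_lt, lt_div_iff₀ (by positivity)] at h
    rw [Nat.card_eq_fintype_card]
    exact_mod_cast (by linarith : (13 * Fintype.card G ^ 2 : ℚ) < 36 * ∑ g : G, orderOf g)
  obtain ⟨x, -, hx⟩ := exists_max_image (univ : Finset G) orderOf univ_nonempty
  have hindex : (zpowers x).index < 3 := by
    have hcard := card_mul_index (zpowers x)
    have hsum := sum_orderOf_le_card_mul_of_le fun g => hx g (mem_univ g)
    rw [Nat.card_zpowers] at hcard
    nlinarith [orderOf_pos x]
  interval_cases hi : (zpowers x).index
  · exact absurd hi index_ne_zero_of_finite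
  · have : IsCyclic G := isCyclic_iff_exists_zpowers_eq_top.mpr ⟨x, index_eq_one.mp hi⟩
    let _ := IsCyclic.commGroup (α := G)
    exact CommGroup.isNilpotent
  · obtain ⟨t, ht⟩ := exists_conj_zpow_eq_zpow_mul hi
    rcases Int.exists_dvd_two_pow_mul_or_exists_isCoprime (orderOf_pos x).ne'
      (orderOf_dvd_sub_one_mul_add_one ht hi) with ⟨a, ha⟩ | ⟨q, hq, hqm, hqt⟩
    · exact isNilpotent_of_dvd_two_pow_mul ht hi ha
    · exact absurd (thirtysix_mul_sum_orderOf_le_of_isCoprime ht hi hq hqm hqt) hψ.not_ge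
end
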